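/- Let $\mathcal{C} \subseteq (S^2)^n$ be a vector trifferent code and let $x, y$ be drawn uniformly and independently from $\mathcal{C}$. For any fixed subset $S \subseteq [n]$, the probability that $\langle x_s, y_s \rangle \neq 0$ for all $s \in S$ is at least $3^{-|S|}$. -/

import Mathlib

/-!
Send a codeword `x` to the tensor `⊗_{s ∈ S} x_s`, a unit vector in a space of dimension
`d = 3^|S|` whose inner products are `∏_{s ∈ S} ⟪x_s, y_s⟫`. For unit vectors `u_1, …, u_N` in
dimension `d`, Cauchy–Schwarz on the diagonal of the matrix `∑ u_i u_iᵀ` (of trace `N`) gives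
`N² ≤ d ∑_{i,j} ⟪u_i, u_j⟫²`, and each summand is at most `1` and vanishes on orthogonal pairs,
so at least `N² / d` of the pairs are non-orthogonal.
-/

open scoped RealInnerProductSpace

def VectorTrifferent (n : ℕ) (C : Finset (Fin n → EuclideanSpace ℝ (Fin 3))) : Prop :=
  (∀ x ∈ C, ∀ i, ‖x i‖ = 1) ∧
  ∀ x ∈ C, ∀ y ∈ C, ∀ z ∈ C, x ≠ y → x ≠ z → y ≠ z →
    ∃ i, ⟪x i, y i⟫ = 0 ∧ ⟪x i, z i⟫ = 0 ∧ ⟪y i, z i⟫ = 0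

open Finset

section GramBound

variable {α κ E : Type*} [NormedAddCommGroup E] [InnerProductSpace ℝ E]

/-- `‖A Aᵀ‖_F² = ‖Aᵀ A‖_F²` for the `κ × C` matrix `A = (a f x)`. -/
theorem sum_sum_sq_sum_mul_comm [Fintype κ] (C : Finset α) (a : κ → α → ℝ) :
    ∑ f, ∑ g, (∑ x ∈ C, a f x * a g x) ^ 2 = ∑ x ∈ C, ∑ y ∈ C, (∑ f, a f x * a f y) ^ 2 := by
  simp only [sq, sum_mul_sum]
  calc _ = ∑ f, ∑ x ∈ C, ∑ g, ∑ y ∈ C, a f x * a g x * (a f y * a g y) :=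
        sum_congr rfl fun _ _ => sum_comm
    _ = ∑ x ∈ C, ∑ y ∈ C, ∑ f, ∑ g, a f x * a g x * (a f y * a g y) :=
        sum_comm.trans <| sum_congr rfl fun _ _ =>
          (sum_congr rfl fun _ _ => sum_comm).trans sum_comm
    _ = _ := by simp only [mul_mul_mul_comm]

theorem sq_sum_norm_sq_le_finrank_mul_sum_sum_inner_sq [FiniteDimensional ℝ E]
    (C : Finset α) (u : α → E) :
    (∑ x ∈ C, ‖u x‖ ^ 2) ^ 2 ≤ Module.finrank ℝ E * ∑ x ∈ C, ∑ y ∈ C, ⟪u x, u y⟫ ^ 2 := by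
  let b := stdOrthonormalBasis ℝ E
  let a f x := ⟪b f, u x⟫
  have parseval (x y : α) : ⟪u x, u y⟫ = ∑ f, a f x * a f y := by
    rw [← b.sum_inner_mul_inner]
    simp only [a, real_inner_comm (b _)]
  calc (∑ x ∈ C, ‖u x‖ ^ 2) ^ 2 = (∑ f, ∑ x ∈ C, a f x * a f x) ^ 2 := by
        simp only [← real_inner_self_eq_norm_sq, parseval, sum_comm (s := C)]
    _ ≤ Module.finrank ℝ E * ∑ f, (∑ x ∈ C, a f x * a f x) ^ 2 := by
        simpa using sq_sum_le_card_mul_sum_sq (s := univ) (f := fun f => ∑ x ∈ C, a f x * a f x)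
    _ ≤ Module.finrank ℝ E * ∑ f, ∑ g, (∑ x ∈ C, a f x * a g x) ^ 2 := by
        gcongr with f
        exact single_le_sum (f := fun g => (∑ x ∈ C, a f x * a g x) ^ 2)
          (fun _ _ => sq_nonneg _) (mem_univ f)
    _ = _ := by simp only [sum_sum_sq_sum_mul_comm, parseval]

theorem sum_sum_inner_sq_le_card_inner_ne_zero (C : Finset α) (u : α → E)
    (hu : ∀ x ∈ C, ‖u x‖ = 1) :
    ∑ x ∈ C, ∑ y ∈ C, ⟪u x, u y⟫ ^ 2 ≤ #{p ∈ C ×ˢ C | ⟪u p.1, u p.2⟫ ≠ 0} := by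
  have inner_sq_le_one : ∀ p ∈ C ×ˢ C, ⟪u p.1, u p.2⟫ ^ 2 ≤ 1 := fun p hp => by
    rw [mem_product] at hp
    rw [sq_le_one_iff_abs_le_one]
    simpa [hu _ hp.1, hu _ hp.2] using abs_real_inner_le_norm (u p.1) (u p.2)
  rw [← sum_product', ← sum_filter_of_ne (p := fun p => ⟪u p.1, u p.2⟫ ≠ 0)
    (fun _ _ h => by simpa using h), card_eq_sum_ones, Nat.cast_sum, Nat.cast_one]
  exact sum_le_sum fun p hp => inner_sq_le_one p (mem_filter.1 hp).1

theorem card_sq_le_finrank_mul_card_inner_ne_zero [FiniteDimensional ℝ E]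
    (C : Finset α) (u : α → E) (hu : ∀ x ∈ C, ‖u x‖ = 1) :
    (#C : ℝ) ^ 2 ≤ Module.finrank ℝ E * #{p ∈ C ×ˢ C | ⟪u p.1, u p.2⟫ ≠ 0} := by
  have trace_eq : ∑ x ∈ C, ‖u x‖ ^ 2 = #C := by
    rw [sum_congr rfl fun x hx => by rw [hu x hx]]; simp
  calc (#C : ℝ) ^ 2 ≤ Module.finrank ℝ E * ∑ x ∈ C, ∑ y ∈ C, ⟪u x, u y⟫ ^ 2 :=
        trace_eq ▸ sq_sum_norm_sq_le_finrank_mul_sum_sum_inner_sq C u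
    _ ≤ _ := by gcongr; exact sum_sum_inner_sq_le_card_inner_ne_zero C u hu

end GramBound

namespace EuclideanSpace

variable {ι κ : Type*} [Fintype ι] [DecidableEq ι] [Fintype κ]

/-- The tensor `⊗ i, x i`, in coordinates. -/
def tprod (x : ι → EuclideanSpace ℝ κ) : EuclideanSpace ℝ (ι → κ) :=
  WithLp.toLp 2 fun f => ∏ i, x i (f i)

theorem inner_tprod (x y : ι → EuclideanSpace ℝ κ) :
    ⟪tprod x, tprod y⟫ = ∏ i, ⟪x i, y i⟫ := by
  simp only [PiLp.inner_apply, tprod, RCLike.inner_apply, conj_trivial, Fintype.prod_sum,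
    prod_mul_distrib]

theorem norm_tprod (x : ι → EuclideanSpace ℝ κ) : ‖tprod x‖ = ∏ i, ‖x i‖ := by
  refine (pow_left_inj₀ (norm_nonneg _) (prod_nonneg fun i _ => norm_nonneg (x i))
    two_ne_zero).1 ?_
  rw [← real_inner_self_eq_norm_sq, inner_tprod, ← prod_pow]
  simp only [real_inner_self_eq_norm_sq]

end EuclideanSpace

/-- For `x, y` drawn uniformly and independently from a vector trifferent code `C`, the
probability that `⟪x s, y s⟫ ≠ 0` for all `s ∈ S` is at least `3^{-|S|}`. -/
theorem prob_nonorth_ge (n : ℕ) (C : Finset (Fin n → EuclideanSpace ℝ (Fin 3)))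
    (hC : VectorTrifferent n C) (hne : C.Nonempty) (S : Finset (Fin n)) :
    ((Nat.card {p : (Fin n → EuclideanSpace ℝ (Fin 3)) × (Fin n → EuclideanSpace ℝ (Fin 3)) //
        p.1 ∈ C ∧ p.2 ∈ C ∧ ∀ s ∈ S, ⟪p.1 s, p.2 s⟫ ≠ 0} : ℝ) / (C.card : ℝ) ^ 2)
      ≥ (1 / 3 : ℝ) ^ S.card := by
  let u (x : Fin n → EuclideanSpace ℝ (Fin 3)) := EuclideanSpace.tprod fun s : S => x s
  have hu : ∀ x ∈ C, ‖u x‖ = 1 := fun x hx => by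
    simp [u, EuclideanSpace.norm_tprod, hC.1 x hx]
  have inner_ne_zero_iff (x y) : ⟪u x, u y⟫ ≠ 0 ↔ ∀ s ∈ S, ⟪x s, y s⟫ ≠ 0 := by
    simp [u, EuclideanSpace.inner_tprod, prod_ne_zero_iff]
  have card_eq : Nat.card {p : (Fin n → EuclideanSpace ℝ (Fin 3)) ×
      (Fin n → EuclideanSpace ℝ (Fin 3)) // p.1 ∈ C ∧ p.2 ∈ C ∧ ∀ s ∈ S, ⟪p.1 s, p.2 s⟫ ≠ 0} =
      #{p ∈ C ×ˢ C | ⟪u p.1, u p.2⟫ ≠ 0} := by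
    rw [← Nat.card_eq_finsetCard]
    exact Nat.card_congr <| Equiv.subtypeEquivRight fun p => by
      simp only [mem_filter, mem_product, inner_ne_zero_iff, and_assoc]
  have card_sq_le := card_sq_le_finrank_mul_card_inner_ne_zero C u hu
  rw [finrank_euclideanSpace, Fintype.card_fun, Fintype.card_coe, Fintype.card_fin] at card_sq_le
  rw [card_eq, ge_iff_le, le_div_iff₀ (by positivity), one_div_pow, one_div,
    inv_mul_le_iff₀ (by positivity)]
  exact_mod_cast card_sq_le
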